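/- arXiv:1805.02224 — 8 statements merged into one kernel-verified Lean document; each statement's English description precedes it below -/
import Mathlib

section
/- Let U be a finite-dimensional complex vector space and let J : U → U be an antilinear map (i.e. additive with J(λu) = conj(λ)·J(u) for all λ ∈ ℂ, u ∈ U) satisfying J ∘ J = −id. If A : U → U is a complex-linear endomorphism commuting with J (A ∘ J = J ∘ A), then the complex determinant of A is real and nonnegative: (det A).im = 0 and 0 ≤ (det A).re. -/
/-!
If `A v = μ • v` with `v ≠ 0`, then `v` and `J v` span a plane stable under `A` and `J`, on which
`A` acts diagonally with eigenvalues `μ` and `conj μ`. Hence `det A = μ * conj μ * det Ā`, where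
`Ā` is the map induced on the quotient by that plane, and `Ā` again commutes with the induced
quaternionic structure. Induction on the dimension shows `0 ≤ det A` in the order of `ℂ`, which
means that `det A` is a nonnegative real number.
-/

open Module Submodule
open scoped ComplexOrder

theorem LinearMap.det_eq_prod_of_apply_basis_eq_smul {R M ι : Type*} [CommRing R]
    [AddCommGroup M] [Module R M] [Fintype ι] [DecidableEq ι] (b : Basis ι R M)
    {f : M →ₗ[R] M} {d : ι → R} (h : ∀ i, f (b i) = d i • b i) : f.det = ∏ i, d i := by
  have hf : f = Matrix.toLin b b (Matrix.diagonal d) :=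
    b.ext fun i => by rw [h, Matrix.toLin_self]; simp [Matrix.diagonal_apply, ite_smul]
  rw [hf, LinearMap.det_toLin, Matrix.det_diagonal]

section Quaternionic

variable {U : Type*} [AddCommGroup U] [Module ℂ U] {J : U →ₛₗ[starRingEnd ℂ] U}

/-- `J v = a • v` would give `-v = J (J v) = (conj a * a) • v`, impossible as `conj a * a ≥ 0`. -/
theorem linearIndependent_pair_apply_of_apply_apply_eq_neg (hJ : ∀ u, J (J u) = -u) {v : U}
    (hv : v ≠ 0) : LinearIndependent ℂ ![v, J v] := by
  rw [LinearIndependent.pair_iff' hv]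
  intro a ha
  have hsmul : (starRingEnd ℂ a * a + 1) • v = 0 := by
    rw [add_smul, one_smul, mul_smul, ha, ← map_smulₛₗ, ha, hJ, neg_add_cancel]
  have hpos : 0 < starRingEnd ℂ a * a + 1 :=
    add_pos_of_nonneg_of_pos (star_mul_self_nonneg a) one_pos
  exact hpos.ne' ((smul_eq_zero.mp hsmul).resolve_right hv)

theorem span_pair_le_comap_of_apply_eq_smul (hJ : ∀ u, J (J u) = -u) {A : U →ₗ[ℂ] U}
    (hA : ∀ u, A (J u) = J (A u)) {v : U} {μ : ℂ} (hAv : A v = μ • v) :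
    span ℂ (Set.range ![v, J v]) ≤ (span ℂ (Set.range ![v, J v])).comap A ∧
      span ℂ (Set.range ![v, J v]) ≤ (span ℂ (Set.range ![v, J v])).comap J := by
  have hv : v ∈ span ℂ (Set.range ![v, J v]) := subset_span ⟨0, rfl⟩
  have hJv : J v ∈ span ℂ (Set.range ![v, J v]) := subset_span ⟨1, rfl⟩
  simp only [span_le, Set.range_subset_iff, Fin.forall_fin_two]
  refine ⟨⟨?_, ?_⟩, hJv, ?_⟩ <;>
    simp only [Matrix.cons_val_zero, Matrix.cons_val_one, SetLike.mem_coe, mem_comap]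
  · rw [hAv]
    exact smul_mem _ _ hv
  · rw [hA, hAv, map_smulₛₗ]
    exact smul_mem _ _ hJv
  · rw [hJ]
    exact neg_mem hv

theorem det_restrict_span_pair_of_apply_eq_smul (hJ : ∀ u, J (J u) = -u) {A : U →ₗ[ℂ] U}
    (hA : ∀ u, A (J u) = J (A u)) {v : U} (hv : v ≠ 0) {μ : ℂ} (hAv : A v = μ • v)
    (hW : span ℂ (Set.range ![v, J v]) ≤ (span ℂ (Set.range ![v, J v])).comap A) :
    (A.restrict hW).det = μ * star μ := by
  let b := Basis.span (linearIndependent_pair_apply_of_apply_apply_eq_neg hJ hv)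
  have hb : ∀ i, (b i : U) = ![v, J v] i := fun i => congrArg Subtype.val (Basis.span_apply _ i)
  rw [LinearMap.det_eq_prod_of_apply_basis_eq_smul b (d := ![μ, star μ]), Fin.prod_univ_two]
  · rfl
  · intro i
    ext
    rw [LinearMap.coe_restrict_apply, SetLike.val_smul, hb]
    fin_cases i
    · exact hAv
    · simp [hA, hAv]

theorem det_nonneg_of_commute_quaternionic [FiniteDimensional ℂ U] (hJ : ∀ u, J (J u) = -u)
    (A : U →ₗ[ℂ] U) (hA : ∀ u, A (J u) = J (A u)) : 0 ≤ A.det := by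
  induction hn : finrank ℂ U using Nat.strong_induction_on generalizing U with
  | _ n ih =>
  rcases subsingleton_or_nontrivial U with hU | hU
  · simp [LinearMap.det_eq_one_of_subsingleton]
  obtain ⟨μ, hμ⟩ := Module.End.exists_eigenvalue A
  obtain ⟨v, hv⟩ := hμ.exists_hasEigenvector
  set W := span ℂ (Set.range ![v, J v])
  obtain ⟨hWA, hWJ⟩ := span_pair_le_comap_of_apply_eq_smul hJ hA hv.apply_eq_smul
  have hdim : finrank ℂ (U ⧸ W) < n := by
    have hW : finrank ℂ W = 2 :=
      finrank_span_eq_card (linearIndependent_pair_apply_of_apply_apply_eq_neg hJ hv.2)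
    have := W.finrank_quotient_add_finrank
    omega
  have hJq : ∀ z, W.mapQ W J hWJ (W.mapQ W J hWJ z) = -z := by
    intro z
    obtain ⟨u, rfl⟩ := W.mkQ_surjective z
    simp [hJ]
  have hAq : ∀ z, W.mapQ W A hWA (W.mapQ W J hWJ z) = W.mapQ W J hWJ (W.mapQ W A hWA z) := by
    intro z
    obtain ⟨u, rfl⟩ := W.mkQ_surjective z
    simp [hA]
  rw [LinearMap.det_eq_det_mul_det W A hWA,
    det_restrict_span_pair_of_apply_eq_smul hJ hA hv.2 hv.apply_eq_smul]
  exact mul_nonneg (mul_star_self_nonneg μ) (ih _ hdim hJq _ hAq rfl)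

end Quaternionic

/-- For a quaternionic structure `J` on a finite-dimensional complex vector space `U`
(an antilinear map with `J ∘ J = -id`) and a complex-linear endomorphism `A`
commuting with `J`, the complex determinant of `A` is real and nonnegative. -/
theorem det_real_nonneg_of_quaternionic
    (U : Type*) [AddCommGroup U] [Module ℂ U] [FiniteDimensional ℂ U]
    (J : U →ₛₗ[starRingEnd ℂ] U) (hJ : ∀ u, J (J u) = -u)
    (A : U →ₗ[ℂ] U) (hA : ∀ u, A (J u) = J (A u)) :
    (LinearMap.det A).im = 0 ∧ 0 ≤ (LinearMap.det A).re := by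
  obtain ⟨hre, him⟩ := Complex.nonneg_iff.mp (det_nonneg_of_commute_quaternionic hJ A hA)
  exact ⟨him.symm, hre⟩
end

section
/- For all 2×2 matrices A and B with quaternion entries, the quartic q is multiplicative: q(A·B) = q(A)·q(B), where A·B is the usual matrix product in M₂(ℍ). -/
/-!
Sending `i ↦ diag(i, -i)` and `j ↦ !![0, 1; -1, 0]` embeds `ℍ` into `M₂(ℂ)` as an `ℝ`-algebra.
Applied entrywise this gives a ring homomorphism `M₂(ℍ) → M₄(ℂ)`, and the determinant of the
image of `A` is `q(A)` (Study's determinant), so `q` inherits multiplicativity from `det`.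
-/

/-- The quartic `q([[a,b],[c,d]]) = |a|²|d|² + |b|²|c|² − 2 Re(a c̄ d b̄)` of a `2 × 2`
quaternionic matrix. -/
noncomputable def quartic (A : Matrix (Fin 2) (Fin 2) (Quaternion ℝ)) : ℝ :=
  Quaternion.normSq (A 0 0) * Quaternion.normSq (A 1 1) +
    Quaternion.normSq (A 0 1) * Quaternion.normSq (A 1 0) -
    2 * (A 0 0 * star (A 1 0) * A 1 1 * star (A 0 1)).re

open Matrix Quaternion

namespace Quaternion

noncomputable def complexMatrixBasis :
    QuaternionAlgebra.Basis (Matrix (Fin 2) (Fin 2) ℂ) (-1 : ℝ) 0 (-1) where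
  i := !![Complex.I, 0; 0, -Complex.I]
  j := !![0, 1; -1, 0]
  k := !![0, Complex.I; Complex.I, 0]
  i_mul_i := by simp [one_fin_two]
  j_mul_j := by simp [one_fin_two]
  i_mul_j := by simp
  j_mul_i := by simp

noncomputable def toComplexMatrix : ℍ[ℝ] →ₐ[ℝ] Matrix (Fin 2) (Fin 2) ℂ :=
  complexMatrixBasis.liftHom

theorem toComplexMatrix_apply (x : ℍ[ℝ]) :
    toComplexMatrix x = !![⟨x.re, x.imI⟩, ⟨x.imJ, x.imK⟩; ⟨-x.imJ, x.imK⟩, ⟨x.re, -x.imI⟩] := by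
  change complexMatrixBasis.lift x = _
  unfold QuaternionAlgebra.Basis.lift
  ext i j; fin_cases i <;> fin_cases j <;> apply Complex.ext <;>
    simp [complexMatrixBasis, algebraMap_matrix_apply]

end Quaternion

namespace Matrix

theorem det_fin_four {R : Type*} [CommRing R] (A : Matrix (Fin 4) (Fin 4) R) :
    A.det =
      A 0 0 * (A 1 1 * (A 2 2 * A 3 3 - A 2 3 * A 3 2) - A 1 2 * (A 2 1 * A 3 3 - A 2 3 * A 3 1)
        + A 1 3 * (A 2 1 * A 3 2 - A 2 2 * A 3 1))
      - A 0 1 * (A 1 0 * (A 2 2 * A 3 3 - A 2 3 * A 3 2) - A 1 2 * (A 2 0 * A 3 3 - A 2 3 * A 3 0)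
        + A 1 3 * (A 2 0 * A 3 2 - A 2 2 * A 3 0))
      + A 0 2 * (A 1 0 * (A 2 1 * A 3 3 - A 2 3 * A 3 1) - A 1 1 * (A 2 0 * A 3 3 - A 2 3 * A 3 0)
        + A 1 3 * (A 2 0 * A 3 1 - A 2 1 * A 3 0))
      - A 0 3 * (A 1 0 * (A 2 1 * A 3 2 - A 2 2 * A 3 1) - A 1 1 * (A 2 0 * A 3 2 - A 2 2 * A 3 0)
        + A 1 2 * (A 2 0 * A 3 1 - A 2 1 * A 3 0)) := by
  rw [det_succ_row_zero, Fin.sum_univ_four]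
  simp only [det_fin_three, submatrix_apply, Fin.succAbove, Fin.reduceLT, Fin.reduceCastSucc,
    Fin.reduceSucc, Fin.succ_zero_eq_one, Fin.succ_one_eq_two, Fin.castSucc_zero, Fin.castSucc_one,
    ↓reduceIte, Fin.isValue, Fin.val_zero, Fin.val_one, Fin.val_two,
    show ((3 : Fin 4) : ℕ) = 3 from rfl]
  ring

variable {n : Type*} [Fintype n] [DecidableEq n]

noncomputable def quaternionToComplex : Matrix n n ℍ[ℝ] →ₐ[ℝ] Matrix (n × Fin 2) (n × Fin 2) ℂ :=
  (compAlgEquiv n (Fin 2) ℂ ℝ).toAlgHom.comp Quaternion.toComplexMatrix.mapMatrix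

theorem quaternionToComplex_apply (A : Matrix n n ℍ[ℝ]) (i j : n) (k l : Fin 2) :
    quaternionToComplex A (i, k) (j, l) = Quaternion.toComplexMatrix (A i j) k l := rfl

theorem det_quaternionToComplex (A : Matrix (Fin 2) (Fin 2) ℍ[ℝ]) :
    (quaternionToComplex A).det = quartic A := by
  rw [← det_reindex_self (finProdFinEquiv : Fin 2 × Fin 2 ≃ Fin 4), det_fin_four]
  simp only [reindex_apply, submatrix_apply,
    show finProdFinEquiv.symm (0 : Fin 4) = ((0, 0) : Fin 2 × Fin 2) from rfl,
    show finProdFinEquiv.symm (1 : Fin 4) = ((0, 1) : Fin 2 × Fin 2) from rfl,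
    show finProdFinEquiv.symm (2 : Fin 4) = ((1, 0) : Fin 2 × Fin 2) from rfl,
    show finProdFinEquiv.symm (3 : Fin 4) = ((1, 1) : Fin 2 × Fin 2) from rfl,
    quaternionToComplex_apply, Quaternion.toComplexMatrix_apply, of_apply, cons_val',
    cons_val_zero, cons_val_one, empty_val', cons_val_fin_one]
  apply Complex.ext <;>
    simp only [Complex.add_re, Complex.sub_re, Complex.mul_re, Complex.mul_im, Complex.add_im,
      Complex.sub_im, Complex.ofReal_re, Complex.ofReal_im, quartic,
      Quaternion.normSq_def', Quaternion.re_mul, Quaternion.imI_mul, Quaternion.imJ_mul,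
      Quaternion.imK_mul, Quaternion.re_star, Quaternion.imI_star, Quaternion.imJ_star,
      Quaternion.imK_star] <;>
    ring

end Matrix

/-- The quartic `q` is multiplicative on `2 × 2` quaternionic matrices. -/
theorem quartic_mul (A B : Matrix (Fin 2) (Fin 2) (Quaternion ℝ)) :
    quartic (A * B) = quartic A * quartic B := by
  apply Complex.ofReal_injective
  rw [Complex.ofReal_mul, ← det_quaternionToComplex, ← det_quaternionToComplex,
    ← det_quaternionToComplex, map_mul, det_mul]
end

section
/- A 2×2 matrix A with quaternion entries is invertible in the matrix ring M₂(ℍ) (i.e. IsUnit A) if and only if q(A) ≠ 0. This identifies GL(2,ℍ) as the complement of the hypersurface q = 0. -/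
open Quaternion Matrix

theorem isUnit_star_mul_self_iff {M : Type*} [Monoid M] [StarMul M] [IsDedekindFiniteMonoid M]
    {a : M} : IsUnit (star a * a) ↔ IsUnit a :=
  ⟨isUnit_of_mul_isUnit_right, fun h => h.star.mul h⟩

section CommRing

variable {R : Type*} [CommRing R]

theorem conjTranspose_mul_self_fin_two (A : Matrix (Fin 2) (Fin 2) ℍ[R]) :
    Aᴴ * A =
      !![((normSq (A 0 0) + normSq (A 1 0) : R) : ℍ[R]),
          star (A 0 0) * A 0 1 + star (A 1 0) * A 1 1;
        star (star (A 0 0) * A 0 1 + star (A 1 0) * A 1 1),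
          ((normSq (A 0 1) + normSq (A 1 1) : R) : ℍ[R])] := by
  ext i j : 1
  fin_cases i <;> fin_cases j <;> simp [mul_apply, Fin.sum_univ_two, star_mul_self]

theorem adjugate_mul_fin_two_of_real_diag (p r : R) (s : ℍ[R]) :
    !![(r : ℍ[R]), -s; -star s, (p : ℍ[R])] * !![(p : ℍ[R]), s; star s, (r : ℍ[R])] =
      (p * r - normSq s) • 1 := by
  ext i j : 1
  fin_cases i <;> fin_cases j <;>
    simp [mul_apply, Fin.sum_univ_two, self_mul_star, star_mul_self, coe_mul_eq_smul,
      mul_coe_eq_smul]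
  all_goals rw [← coe_one, smul_coe, smul_coe, ← coe_neg, ← coe_add]; congr 1; ring

theorem mul_adjugate_fin_two_of_real_diag (p r : R) (s : ℍ[R]) :
    !![(p : ℍ[R]), s; star s, (r : ℍ[R])] * !![(r : ℍ[R]), -s; -star s, (p : ℍ[R])] =
      (p * r - normSq s) • 1 := by
  ext i j : 1
  fin_cases i <;> fin_cases j <;>
    simp [mul_apply, Fin.sum_univ_two, self_mul_star, star_mul_self, coe_mul_eq_smul,
      mul_coe_eq_smul]
  all_goals rw [← coe_one, smul_coe, smul_coe, ← coe_neg, ← coe_add]; congr 1; ring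

end CommRing

theorem isUnit_fin_two_of_real_diag_iff {K : Type*} [Field K] (p r : K) (s : ℍ[K]) :
    IsUnit !![(p : ℍ[K]), s; star s, (r : ℍ[K])] ↔ p * r - normSq s ≠ 0 := by
  constructor
  · intro hM hdet
    have hadj : !![(r : ℍ[K]), -s; -star s, (p : ℍ[K])] = 0 :=
      hM.mul_left_eq_zero.mp (by rw [adjugate_mul_fin_two_of_real_diag, hdet, zero_smul])
    have hr : (r : ℍ[K]) = 0 := congr_fun₂ hadj 0 0
    have hs : s = 0 := neg_eq_zero.mp (congr_fun₂ hadj 0 1)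
    have hp : (p : ℍ[K]) = 0 := congr_fun₂ hadj 1 1
    have hM0 : !![(p : ℍ[K]), s; star s, (r : ℍ[K])] = 0 := by
      rw [hp, hr, hs, star_zero]
      exact (eta_fin_two 0).symm
    exact not_isUnit_zero (hM0 ▸ hM)
  · intro hdet
    refine ⟨⟨_, (p * r - normSq s)⁻¹ • !![(r : ℍ[K]), -s; -star s, (p : ℍ[K])], ?_, ?_⟩,
      rfl⟩
    · rw [mul_smul_comm, mul_adjugate_fin_two_of_real_diag, smul_smul, inv_mul_cancel₀ hdet,
        one_smul]
    · rw [smul_mul_assoc, adjugate_mul_fin_two_of_real_diag, smul_smul, inv_mul_cancel₀ hdet,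
        one_smul]

theorem quartic_eq_mul_sub_normSq (A : Matrix (Fin 2) (Fin 2) ℍ[ℝ]) :
    quartic A = (normSq (A 0 0) + normSq (A 1 0)) * (normSq (A 0 1) + normSq (A 1 1)) -
      normSq (star (A 0 0) * A 0 1 + star (A 1 0) * A 1 1) := by
  simp only [quartic, normSq_def', re_mul, imI_mul, imJ_mul, imK_mul, re_add, imI_add, imJ_add,
    imK_add, re_star, imI_star, imJ_star, imK_star]
  ring

/-- A `2 × 2` quaternionic matrix is invertible in the matrix ring `M₂(ℍ)` if and only
if its quartic `q` is nonzero: `GL(2,ℍ)` is the complement of the hypersurface `q = 0`. -/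
theorem isUnit_iff_quartic_ne_zero (A : Matrix (Fin 2) (Fin 2) (Quaternion ℝ)) :
    IsUnit A ↔ quartic A ≠ 0 := by
  rw [← isUnit_star_mul_self_iff, star_eq_conjTranspose, conjTranspose_mul_self_fin_two,
    isUnit_fin_two_of_real_diag_iff, quartic_eq_mul_sub_normSq]
end

section
/- Let A = [[a,b],[c,d]] be a 2×2 matrix with quaternion entries whose first column (a,c) is nonzero. Then q(A) = 0 if and only if the second column is a right quaternionic multiple of the first, i.e. there exists a quaternion h with b = a·h and d = c·h. (Geometrically: the two columns determine the same point of the quaternionic projective line.) -/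
open Quaternion

lemma quartic_of (a b c d : Quaternion ℝ) :
    quartic !![a, b; c, d] =
      normSq a * normSq d + normSq b * normSq c - 2 * (a * star c * d * star b).re := by
  simp [quartic]

lemma quartic_of_mul_add (a c h e : Quaternion ℝ) :
    quartic !![a, a * h; c, c * h + e] = normSq a * normSq e := by
  rw [quartic_of]
  simp only [normSq_def', re_mul, imI_mul, imJ_mul, imK_mul, re_add, imI_add, imJ_add,
    imK_add, re_star, imI_star, imJ_star, imK_star]
  ring

lemma quartic_swap_rows (a b c d : Quaternion ℝ) :
    quartic !![c, d; a, b] = quartic !![a, b; c, d] := by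
  rw [quartic_of, quartic_of]
  simp only [normSq_def', re_mul, imI_mul, imJ_mul, imK_mul, re_star, imI_star, imJ_star,
    imK_star]
  ring

lemma quartic_of_mul (a c h : Quaternion ℝ) : quartic !![a, a * h; c, c * h] = 0 := by
  simpa using quartic_of_mul_add a c h 0

lemma exists_mul_of_quartic_eq_zero {a b c d : Quaternion ℝ} (ha : a ≠ 0)
    (hq : quartic !![a, b; c, d] = 0) : ∃ h, b = a * h ∧ d = c * h := by
  have hb : b = a * (a⁻¹ * b) := (mul_inv_cancel_left₀ ha b).symm
  have hd : d = c * (a⁻¹ * b) + (d - c * (a⁻¹ * b)) := (add_sub_cancel _ _).symm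
  rw [hb, hd, quartic_of_mul_add, mul_eq_zero, normSq_eq_zero, normSq_eq_zero] at hq
  have he : d - c * (a⁻¹ * b) = 0 := hq.resolve_left ha
  exact ⟨a⁻¹ * b, hb, sub_eq_zero.mp he⟩

/-- For a `2 × 2` quaternionic matrix `[[a,b],[c,d]]` with nonzero first column `(a,c)`,
the quartic vanishes iff the second column is a right quaternionic multiple of the first,
i.e. the two columns determine the same point of the quaternionic projective line. -/
theorem quartic_eq_zero_iff_columns_dependent (a b c d : Quaternion ℝ)
    (hcol : ¬(a = 0 ∧ c = 0)) :
    quartic !![a, b; c, d] = 0 ↔ ∃ h : Quaternion ℝ, b = a * h ∧ d = c * h := by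
  constructor
  · intro hq
    by_cases ha : a = 0
    · have hc : c ≠ 0 := fun hc => hcol ⟨ha, hc⟩
      rw [← quartic_swap_rows] at hq
      obtain ⟨h, hd, hb⟩ := exists_mul_of_quartic_eq_zero hc hq
      exact ⟨h, hb, hd⟩
    · exact exists_mul_of_quartic_eq_zero ha hq
  · rintro ⟨h, rfl, rfl⟩
    exact quartic_of_mul a c h
end

section
/- Let A be a 2×2 matrix with quaternion entries and let P be a 2×2 matrix with real entries, regarded as a quaternionic matrix via the inclusion ℝ ⊆ ℍ. Then q(A·P) = (det P)² · q(A); in particular q is invariant under the right action of SL(2,ℝ). -/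
/-!
Writing `u, v ∈ ℍ²` for the columns of `A`, `q(A) = ‖u‖²‖v‖² - |⟨u, v⟩|²` is the determinant of
the Hermitian Gram matrix `Aᴴ A`. Right multiplication by a real `P` turns the Gram matrix `G`
into `Pᵀ G P`, and since `P` is real this determinant is multiplied by `(det P)²`, exactly as for
real symmetric matrices.
-/

open Quaternion Matrix

/-- The Moore determinant of a `2 × 2` Hermitian quaternionic matrix: its diagonal is real and
`H 1 0 = star (H 0 1)`, so only these entries are read. -/
def hermitianDet {R : Type*} [CommRing R] (H : Matrix (Fin 2) (Fin 2) ℍ[R]) : R :=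
  (H 0 0).re * (H 1 1).re - normSq (H 0 1)

namespace Quaternion

variable {R : Type*} [CommRing R]

theorem re_mul_comm (a b : ℍ[R]) : (a * b).re = (b * a).re := by
  simp only [re_mul]
  ring

theorem re_star_mul_mul_star_star_mul (a b c d : ℍ[R]) :
    (star a * b * star (star c * d)).re = (a * star c * d * star b).re := by
  rw [star_mul, star_star, ← mul_assoc, re_mul_comm, ← re_star]
  simp only [star_mul, star_star, mul_assoc]
  rw [re_mul_comm d, mul_assoc, re_mul_comm (star b)]
  simp only [mul_assoc]

end Quaternion

theorem quartic_eq_hermitianDet_conjTranspose_mul_self (A : Matrix (Fin 2) (Fin 2) ℍ[ℝ]) :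
    quartic A = hermitianDet (Aᴴ * A) := by
  simp only [quartic, hermitianDet, mul_apply, Fin.sum_univ_two, conjTranspose_apply, re_add,
    normSq_add, re_star_mul_mul_star_star_mul, star_mul_self, re_coe, map_mul, normSq_star]
  ring

theorem hermitianDet_conjTranspose_mul_mul {R : Type*} [CommRing R] [NoZeroDivisors R]
    [CharZero R] {H : Matrix (Fin 2) (Fin 2) ℍ[R]} (hH : H.IsHermitian)
    (P : Matrix (Fin 2) (Fin 2) R) :
    hermitianDet ((P.map (algebraMap R ℍ[R]))ᴴ * H * P.map (algebraMap R ℍ[R])) =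
      P.det ^ 2 * hermitianDet H := by
  obtain ⟨x, hx⟩ : ∃ x : R, H 0 0 = x := ⟨_, star_eq_self.1 (hH.apply 0 0)⟩
  obtain ⟨z, hz⟩ : ∃ z : R, H 1 1 = z := ⟨_, star_eq_self.1 (hH.apply 1 1)⟩
  have hy : H 1 0 = star (H 0 1) := (hH.apply 1 0).symm
  simp only [hermitianDet, mul_apply, Fin.sum_univ_two, conjTranspose_apply, map_apply,
    algebraMap_def, star_coe, hx, hz, hy, det_fin_two, coe_mul_eq_smul, mul_coe_eq_smul,
    normSq_def', smul_add, smul_eq_mul, re_add, imI_add, imJ_add, imK_add, re_smul, imI_smul,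
    imJ_smul, imK_smul, re_coe, imI_coe, imJ_coe, imK_coe, re_star, imI_star, imJ_star, imK_star]
  ring

/-- For a `2 × 2` quaternionic matrix `A` and a real `2 × 2` matrix `P` (regarded as a
quaternionic matrix via `ℝ ⊆ ℍ`), one has `q(A·P) = (det P)² · q(A)`; in particular `q`
is invariant under the right action of `SL(2,ℝ)`. -/
theorem quartic_mul_real (A : Matrix (Fin 2) (Fin 2) (Quaternion ℝ))
    (P : Matrix (Fin 2) (Fin 2) ℝ) :
    quartic (A * P.map (algebraMap ℝ (Quaternion ℝ))) = P.det ^ 2 * quartic A := by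
  set P' := P.map (algebraMap ℝ ℍ[ℝ])
  have gram_mul : (A * P')ᴴ * (A * P') = P'ᴴ * (Aᴴ * A) * P' := by
    simp only [conjTranspose_mul, Matrix.mul_assoc]
  rw [quartic_eq_hermitianDet_conjTranspose_mul_self, gram_mul,
    quartic_eq_hermitianDet_conjTranspose_mul_self]
  exact hermitianDet_conjTranspose_mul_mul (isHermitian_conjTranspose_mul_self A) P
end

section
/- Let n ≥ 2 and let f : EuclideanSpace ℝ (Fin n) → ℝ be a C^∞ function. Then the trace-free Hessian of f vanishes identically — i.e. there exists a function g : EuclideanSpace ℝ (Fin n) → ℝ such that for all x, v, w one has (fderiv ℝ (fderiv ℝ f) x v) w = g(x) · ⟪v, w⟫ — if and only if there exist a, c ∈ ℝ and b ∈ EuclideanSpace ℝ (Fin n) such that f(x) = a·‖x‖² + ⟪x, b⟫ + c for all x. -/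
open scoped RealInnerProductSpace

lemma quad_hasFDerivAt {n : ℕ} (a : ℝ) (b : EuclideanSpace ℝ (Fin n)) (c : ℝ)
    (x : EuclideanSpace ℝ (Fin n)) :
    HasFDerivAt (fun y : EuclideanSpace ℝ (Fin n) => a * ⟪y, y⟫ + ⟪y, b⟫ + c)
      ((((2 * a) • innerSL ℝ : EuclideanSpace ℝ (Fin n) →L[ℝ]
          (EuclideanSpace ℝ (Fin n) →L[ℝ] ℝ)) x) + innerSL ℝ b) x := by
  have h1 := (hasFDerivAt_id x).inner ℝ (hasFDerivAt_id x)
  have h2 := (hasFDerivAt_id x).inner ℝ (hasFDerivAt_const b x)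
  have := ((h1.const_mul a).add h2).add_const c
  refine this.congr_fderiv ?_
  ext v
  simp only [ContinuousLinearMap.add_apply, ContinuousLinearMap.smul_apply, innerSL_apply_apply,
    ContinuousLinearMap.coe_comp', Function.comp_apply, ContinuousLinearMap.prod_apply,
    ContinuousLinearMap.coe_id', id_eq, ContinuousLinearMap.zero_apply, fderivInnerCLM_apply,
    ContinuousLinearMap.coe_smul', Pi.smul_apply, smul_eq_mul, inner_zero_right, add_zero]
  rw [real_inner_comm v x, real_inner_comm b v]
  ring

set_option maxHeartbeats 1000000 in
/-- For `n ≥ 2`, a smooth function `f : ℝⁿ → ℝ` has vanishing trace-free Hessian (i.e. its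
Hessian at every point is a scalar multiple of the inner product) if and only if it has the
form `f(x) = a‖x‖² + ⟪x,b⟫ + c`. -/
theorem traceFreeHessian_eq_zero_iff (n : ℕ) (hn : 2 ≤ n)
    (f : EuclideanSpace ℝ (Fin n) → ℝ) (hf : ContDiff ℝ (⊤ : ℕ∞) f) :
    (∃ g : EuclideanSpace ℝ (Fin n) → ℝ,
      ∀ (x v w : EuclideanSpace ℝ (Fin n)),
        fderiv ℝ (fderiv ℝ f) x v w = g x * ⟪v, w⟫) ↔
    (∃ (a c : ℝ) (b : EuclideanSpace ℝ (Fin n)),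
      ∀ x : EuclideanSpace ℝ (Fin n), f x = a * ‖x‖ ^ 2 + ⟪x, b⟫ + c) := by
  constructor
  · rintro ⟨g, hg⟩
    have hf1 : ContDiff ℝ (⊤ : ℕ∞) (fderiv ℝ f) := hf.fderiv_right (by simp)
    have hd1 : Differentiable ℝ (fderiv ℝ f) := hf1.differentiable (by simp)
    have hf2 : ContDiff ℝ (⊤ : ℕ∞) (fderiv ℝ (fderiv ℝ f)) := hf1.fderiv_right (by simp)
    have hd2 : Differentiable ℝ (fderiv ℝ (fderiv ℝ f)) := hf2.differentiable (by simp)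
    set F := fderiv ℝ (fderiv ℝ f) with hF
    set e : Fin n → EuclideanSpace ℝ (Fin n) := fun i => EuclideanSpace.single i 1 with he
    have hee : ∀ i, ⟪e i, e i⟫ = (1 : ℝ) := by
      intro i
      rw [he]
      simp [EuclideanSpace.inner_single_left, EuclideanSpace.single_apply]
    have heij : ∀ i j, i ≠ j → ⟪e i, e j⟫ = (0 : ℝ) := by
      intro i j hij
      rw [he]
      simp [EuclideanSpace.inner_single_left, EuclideanSpace.single_apply, Ne.symm hij]
    set i0 : Fin n := ⟨0, by omega⟩ with hi0
    -- g is differentiable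
    have hgeq : g = fun x => F x (e i0) (e i0) := by
      funext x
      have := hg x (e i0) (e i0)
      rw [hee i0, mul_one] at this
      exact this.symm
    have hgd : Differentiable ℝ g := by
      rw [hgeq]
      exact (hd2.clm_apply (differentiable_const _)).clm_apply (differentiable_const _)
    -- derivative of evaluated second derivative
    have hkey : ∀ (x u v w : EuclideanSpace ℝ (Fin n)),
        fderiv ℝ F x u v w = fderiv ℝ g x u * ⟪v, w⟫ := by
      intro x u v w
      have h1 : HasFDerivAt (fun y => F y v w)
          (((ContinuousLinearMap.apply ℝ ℝ w).comp
            (ContinuousLinearMap.apply ℝ (EuclideanSpace ℝ (Fin n) →L[ℝ] ℝ) v)).comp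
              (fderiv ℝ F x)) x := by
        have := ((hd2 x).hasFDerivAt.clm_apply (hasFDerivAt_const v x)).clm_apply
          (hasFDerivAt_const w x)
        refine this.congr_fderiv ?_
        ext u
        simp
      have h2 : HasFDerivAt (fun y => F y v w) (⟪v, w⟫ • fderiv ℝ g x) x := by
        have heq : (fun y => F y v w) = fun y => g y * ⟪v, w⟫ := by
          funext y; exact hg y v w
        rw [heq]
        exact (hgd x).hasFDerivAt.mul_const _
      have huniq := h1.unique h2
      calc fderiv ℝ F x u v w
          = (((ContinuousLinearMap.apply ℝ ℝ w).comp
            (ContinuousLinearMap.apply ℝ (EuclideanSpace ℝ (Fin n) →L[ℝ] ℝ) v)).comp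
              (fderiv ℝ F x)) u := rfl
        _ = (⟪v, w⟫ • fderiv ℝ g x) u := by rw [huniq]
        _ = fderiv ℝ g x u * ⟪v, w⟫ := by simp [mul_comm]
    -- symmetry of the third derivative
    have hsymm : ∀ (x u v : EuclideanSpace ℝ (Fin n)), fderiv ℝ F x u v = fderiv ℝ F x v u :=
      fun x u v =>
        second_derivative_symmetric (fun y => (hd1 y).hasFDerivAt) (hd2 x).hasFDerivAt u v
    -- fderiv g = 0
    have hg0 : ∀ x, fderiv ℝ g x = 0 := by
      intro x
      have hbasis : ∀ i : Fin n, fderiv ℝ g x (e i) = 0 := by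
        intro i
        obtain ⟨j, hij⟩ : ∃ j : Fin n, i ≠ j := by
          rcases Decidable.eq_or_ne i ⟨0, by omega⟩ with h | h
          · exact ⟨⟨1, by omega⟩, by simp [h, Fin.ext_iff]⟩
          · exact ⟨⟨0, by omega⟩, h⟩
        have h1 := hkey x (e i) (e j) (e j)
        have h2 := hkey x (e j) (e i) (e j)
        rw [hsymm x (e i) (e j)] at h1
        rw [h2, hee j, heij i j hij, mul_one, mul_zero] at h1
        exact h1.symm
      apply ContinuousLinearMap.coe_injective
      apply Module.Basis.ext (EuclideanSpace.basisFun (Fin n) ℝ).toBasis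
      intro i
      simpa [he, EuclideanSpace.basisFun_apply] using hbasis i
    have hgc : ∀ x, g x = g 0 := fun x => is_const_of_fderiv_eq_zero hgd hg0 x 0
    set a : ℝ := g 0 / 2 with ha
    set A : EuclideanSpace ℝ (Fin n) →L[ℝ] (EuclideanSpace ℝ (Fin n) →L[ℝ] ℝ) :=
      (2 * a) • innerSL ℝ with hA
    have hFx : ∀ x, F x = A := by
      intro x
      ext v w
      rw [hg x v w, hgc x]
      simp only [hA, ContinuousLinearMap.smul_apply, innerSL_apply_apply, smul_eq_mul, ha]
      change _ = _ * ⟪v, w⟫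
      ring
    -- step 1 : fderiv f is affine
    have hφ : ∀ x, HasFDerivAt (fun y => fderiv ℝ f y - A y)
        (0 : EuclideanSpace ℝ (Fin n) →L[ℝ] (EuclideanSpace ℝ (Fin n) →L[ℝ] ℝ)) x := by
      intro x
      have h := (hd1 x).hasFDerivAt.sub A.hasFDerivAt
      rwa [← hF, hFx x, sub_self] at h
    have hstep1 : ∀ x, fderiv ℝ f x - A x = fderiv ℝ f 0 - A 0 :=
      fun x => is_const_of_fderiv_eq_zero (fun y => (hφ y).differentiableAt)
        (fun y => (hφ y).fderiv) x 0
    set L : EuclideanSpace ℝ (Fin n) →L[ℝ] ℝ := fderiv ℝ f 0 - A 0 with hL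
    set b : EuclideanSpace ℝ (Fin n) := (InnerProductSpace.toDual ℝ _).symm L with hb
    have hbL : innerSL ℝ b = L := by
      ext v
      rw [innerSL_apply_apply, hb]
      exact InnerProductSpace.toDual_symm_apply
    have hψ : ∀ x, HasFDerivAt
        (fun y : EuclideanSpace ℝ (Fin n) => f y - (a * ⟪y, y⟫ + ⟪y, b⟫ + 0))
        (0 : EuclideanSpace ℝ (Fin n) →L[ℝ] ℝ) x := by
      intro x
      have hq := quad_hasFDerivAt a b 0 x
      have h := (hf.differentiable (by simp) x).hasFDerivAt.sub hq
      have hfx : fderiv ℝ f x = A x + L := eq_add_of_sub_eq' (hstep1 x)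
      rw [hbL, ← hA, hfx, sub_self] at h
      exact h
    have hconst : ∀ x, (fun y : EuclideanSpace ℝ (Fin n) => f y - (a * ⟪y, y⟫ + ⟪y, b⟫ + 0)) x
        = (fun y : EuclideanSpace ℝ (Fin n) => f y - (a * ⟪y, y⟫ + ⟪y, b⟫ + 0)) 0 :=
      fun x => is_const_of_fderiv_eq_zero (fun y => (hψ y).differentiableAt)
        (fun y => (hψ y).fderiv) x 0
    refine ⟨a, f 0, b, fun x => ?_⟩
    have h := hconst x
    simp only [inner_zero_left, mul_zero, add_zero, zero_add, sub_zero] at h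
    rw [real_inner_self_eq_norm_sq] at h
    linarith
  · rintro ⟨a, c, b, hfeq⟩
    set A : EuclideanSpace ℝ (Fin n) →L[ℝ] (EuclideanSpace ℝ (Fin n) →L[ℝ] ℝ) :=
      (2 * a) • innerSL ℝ with hA
    have hfeq' : f = fun y => a * ⟪y, y⟫ + ⟪y, b⟫ + c := by
      funext y; rw [hfeq y, real_inner_self_eq_norm_sq]
    have hff : ∀ x, HasFDerivAt f (A x + innerSL ℝ b) x := by
      intro x; rw [hfeq']; exact quad_hasFDerivAt a b c x
    have hfd : fderiv ℝ f = fun x => A x + innerSL ℝ b := funext fun x => (hff x).fderiv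
    have h2 : ∀ x : EuclideanSpace ℝ (Fin n), fderiv ℝ (fderiv ℝ f) x = A := by
      intro x
      rw [hfd]
      exact (A.hasFDerivAt.add_const (innerSL ℝ b)).fderiv
    refine ⟨fun _ => 2 * a, fun x v w => ?_⟩
    rw [h2 x]
    simp [hA]
    exact Or.inl rfl
end

section
/- Let P be an invertible n×n real matrix. Then the function M ↦ log(det M) on n×n real matrices is differentiable at P with derivative A ↦ trace(P⁻¹ · A); i.e. HasFDerivAt (fun M => Real.log M.det) (fun A => (P⁻¹ * A).trace) P. -/
attribute [local instance] Matrix.normedAddCommGroup Matrix.normedSpace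

/-! `det` is multilinear in the rows, so its derivative at `P` sends `A` to
`∑ i, det (P with row i replaced by A i)`; expanding each of these determinants along the
replaced row gives `trace (adjugate P * A)`. The chain rule with `log' x = x⁻¹` and
`P⁻¹ = (det P)⁻¹ • adjugate P` finishes. -/

open Matrix

namespace Matrix

variable {ι 𝕜 R : Type*} [Fintype ι] [DecidableEq ι]

noncomputable def detRowContinuousMultilinear [NontriviallyNormedField 𝕜] :
    ContinuousMultilinearMap 𝕜 (fun _ : ι => ι → 𝕜) 𝕜 :=
  { (detRowAlternating : (ι → 𝕜) [⋀^ι]→ₗ[𝕜] 𝕜).toMultilinearMap with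
    cont := continuous_id.matrix_det }

theorem det_updateRow_eq_sum_adjugate [CommRing R] (P : Matrix ι ι R) (i : ι) (b : ι → R) :
    (P.updateRow i b).det = ∑ j, adjugate P j i * b j := by
  rw [← cramer_transpose_apply, cramer_eq_adjugate_mulVec, ← adjugate_transpose]
  rfl

theorem sum_det_updateRow [CommRing R] (P A : Matrix ι ι R) :
    ∑ i, (P.updateRow i (A i)).det = (adjugate P * A).trace := by
  simp only [det_updateRow_eq_sum_adjugate, trace, diag_apply, mul_apply]
  exact Finset.sum_comm

theorem hasFDerivAt_det [NontriviallyNormedField 𝕜] [CompleteSpace 𝕜] (P : Matrix ι ι 𝕜) :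
    HasFDerivAt det
      (LinearMap.toContinuousLinearMap
        ((traceLinearMap ι 𝕜 𝕜).comp (LinearMap.mulLeft 𝕜 (adjugate P)))) P := by
  refine (detRowContinuousMultilinear.hasFDerivAt P).congr_fderiv ?_
  ext A
  exact (ContinuousMultilinearMap.linearDeriv_apply _ P A).trans (sum_det_updateRow P A)

end Matrix

/-- For an invertible `n × n` real matrix `P`, the function `M ↦ log (det M)` is
differentiable at `P` with derivative `A ↦ trace(P⁻¹ · A)`. -/
theorem hasFDerivAt_log_det (n : ℕ) (P : Matrix (Fin n) (Fin n) ℝ) (hP : IsUnit P.det) :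
    HasFDerivAt (fun M : Matrix (Fin n) (Fin n) ℝ => Real.log M.det)
      (LinearMap.toContinuousLinearMap
        ((Matrix.traceLinearMap (Fin n) ℝ ℝ).comp (LinearMap.mulLeft ℝ P⁻¹))) P := by
  refine ((Real.hasDerivAt_log hP.ne_zero).comp_hasFDerivAt P
    (hasFDerivAt_det P)).congr_fderiv ?_
  ext A
  change P.det⁻¹ * (adjugate P * A).trace = (P⁻¹ * A).trace
  rw [inv_def, Ring.inverse_eq_inv, smul_mul, trace_smul, smul_eq_mul]
end

section
/- Let P be an invertible n×n real matrix. Then the second derivative of the function M ↦ log(det M) at P, evaluated on a pair of directions (A, B), equals −trace(P⁻¹ · A · P⁻¹ · B); i.e. the bilinear Hessian of log ∘ det at P is (A,B) ↦ −(P⁻¹ * A * P⁻¹ * B).trace. In particular at P = 1 the Hessian is (A,B) ↦ −trace(A·B). -/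
attribute [local instance] Matrix.normedAddCommGroup Matrix.normedSpace

/-!
Near an invertible `P`, Jacobi's formula gives `d(log det)_X B = tr (X⁻¹ B)`; it follows from
`det (X + t B) = det X · det (1 + t X⁻¹ B)` and `det (1 + t Y) = 1 + t tr Y + O(t²)`.
Differentiating `X ↦ tr (X⁻¹ B)` at `P` in direction `A`, with `d(X⁻¹) = -P⁻¹ A P⁻¹`,
gives the Hessian `-tr (P⁻¹ A P⁻¹ B)`.
-/

open Matrix Polynomial Filter Topology

theorem fderiv_fderiv_apply {𝕜 E F : Type*} [NontriviallyNormedField 𝕜]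
    [NormedAddCommGroup E] [NormedSpace 𝕜 E] [NormedAddCommGroup F] [NormedSpace 𝕜 F]
    {f : E → F} {x : E} (hf : DifferentiableAt 𝕜 (fderiv 𝕜 f) x) (v w : E) :
    fderiv 𝕜 (fderiv 𝕜 f) x v w = fderiv 𝕜 (fun y => fderiv 𝕜 f y w) x v := by
  rw [fderiv_clm_apply hf (differentiableAt_const w)]
  simp

namespace Matrix

variable {𝕜 : Type*} [NontriviallyNormedField 𝕜] {ι : Type*} [Fintype ι] [DecidableEq ι]

theorem hasDerivAt_det_one_add_smul (X : Matrix ι ι 𝕜) :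
    HasDerivAt (fun t : 𝕜 => (1 + t • X).det) X.trace 0 := by
  have hpoly : (fun t : 𝕜 => (1 + t • X).det) =
      fun t => (det (1 + (Polynomial.X : 𝕜[X]) • X.map C)).eval t := by
    ext t
    simp [eval_det, ← smul_eq_mul_diagonal]
  rw [hpoly, ← derivative_det_one_add_X_smul]
  exact Polynomial.hasDerivAt _ 0

theorem contDiff_det {k : WithTop ℕ∞} : ContDiff 𝕜 k (fun M : Matrix ι ι 𝕜 => M.det) := by
  simp only [det_apply]
  fun_prop

theorem differentiable_det : Differentiable 𝕜 (fun M : Matrix ι ι 𝕜 => M.det) :=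
  (contDiff_det (k := 1)).differentiable one_ne_zero

theorem fderiv_det_apply {M : Matrix ι ι 𝕜} (hM : IsUnit M.det) (H : Matrix ι ι 𝕜) :
    fderiv 𝕜 (fun M : Matrix ι ι 𝕜 => M.det) M H = M.det * (M⁻¹ * H).trace := by
  have hline : (fun t : 𝕜 => (M + t • H).det) = fun t => M.det * (1 + t • (M⁻¹ * H)).det := by
    ext t
    rw [← det_mul, mul_add, mul_one, mul_smul_comm, ← Matrix.mul_assoc, mul_nonsing_inv M hM,
      Matrix.one_mul]
  have h : HasLineDerivAt 𝕜 (fun M : Matrix ι ι 𝕜 => M.det) (M.det * (M⁻¹ * H).trace) M H := by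
    unfold HasLineDerivAt
    rw [hline]
    exact (hasDerivAt_det_one_add_smul _).const_mul _
  exact ((differentiable_det M).hasFDerivAt.hasLineDerivAt H).unique h

theorem fderiv_log_det_apply {M : Matrix ι ι ℝ} (hM : IsUnit M.det) (H : Matrix ι ι ℝ) :
    fderiv ℝ (fun M : Matrix ι ι ℝ => Real.log M.det) M H = (M⁻¹ * H).trace := by
  have h : HasFDerivAt (fun M : Matrix ι ι ℝ => Real.log M.det)
      (M.det⁻¹ • fderiv ℝ (fun M : Matrix ι ι ℝ => M.det) M) M :=
    (differentiable_det M).hasFDerivAt.log hM.ne_zero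
  rw [h.fderiv, _root_.smul_apply, fderiv_det_apply hM, smul_eq_mul,
    inv_mul_cancel_left₀ hM.ne_zero]

variable [CompleteSpace 𝕜]

/- The entrywise norm does not make matrices a normed ring, but the `L∞`-operator norm does and
induces the same topology, so `hasFDerivAt_ringInverse` transfers. -/
theorem hasFDerivAt_inv {P : Matrix ι ι 𝕜} (hP : IsUnit P.det) :
    HasFDerivAt (fun X : Matrix ι ι 𝕜 => X⁻¹)
      (-LinearMap.mulLeftRight 𝕜 (P⁻¹, P⁻¹)).toContinuousLinearMap P := by
  let _ : NormedRing (Matrix ι ι 𝕜) := Matrix.linftyOpNormedRing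
  let _ : NormedAlgebra 𝕜 (Matrix ι ι 𝕜) := Matrix.linftyOpNormedAlgebra
  have : HasSummableGeomSeries (Matrix ι ι 𝕜) :=
    @instHasSummableGeomSeriesOfCompleteSpace _ _ (FiniteDimensional.complete 𝕜 _)
  have h := hasFDerivAt_ringInverse (𝕜 := 𝕜) (P.isUnit_iff_isUnit_det.mpr hP).unit
  rw [IsUnit.unit_spec] at h
  rw [show (fun X : Matrix ι ι 𝕜 => X⁻¹) = Ring.inverse from funext nonsing_inv_eq_ringInverse]
  refine h.congr_fderiv (ContinuousLinearMap.ext fun H => ?_)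
  simp only [coe_units_inv, IsUnit.unit_spec, _root_.neg_apply,
    ContinuousLinearMap.mulLeftRight_apply, map_neg]
  rfl

theorem fderiv_trace_inv_mul_apply {P : Matrix ι ι 𝕜} (hP : IsUnit P.det) (A B : Matrix ι ι 𝕜) :
    fderiv 𝕜 (fun X : Matrix ι ι 𝕜 => (X⁻¹ * B).trace) P A = -(P⁻¹ * A * P⁻¹ * B).trace := by
  let traceMulRight : Matrix ι ι 𝕜 →L[𝕜] 𝕜 :=
    (traceLinearMap ι 𝕜 𝕜 ∘ₗ LinearMap.mulRight 𝕜 B).toContinuousLinearMap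
  have h : HasFDerivAt (fun X : Matrix ι ι 𝕜 => (X⁻¹ * B).trace)
      (traceMulRight.comp (-LinearMap.mulLeftRight 𝕜 (P⁻¹, P⁻¹)).toContinuousLinearMap) P :=
    traceMulRight.hasFDerivAt.comp P (hasFDerivAt_inv hP)
  rw [h.fderiv]
  simp [traceMulRight]

end Matrix

/-- For an invertible `n × n` real matrix `P`, the bilinear Hessian of `M ↦ log (det M)` at
`P` evaluated on directions `(A, B)` equals `−trace(P⁻¹ · A · P⁻¹ · B)`; in particular at
`P = 1` it is `(A,B) ↦ −trace(A·B)`. -/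
theorem iteratedFDeriv_two_log_det (n : ℕ) (P : Matrix (Fin n) (Fin n) ℝ)
    (hP : IsUnit P.det) (A B : Matrix (Fin n) (Fin n) ℝ) :
    iteratedFDeriv ℝ 2 (fun M : Matrix (Fin n) (Fin n) ℝ => Real.log M.det) P ![A, B] =
      -(P⁻¹ * A * P⁻¹ * B).trace := by
  have hsmooth : ContDiffAt ℝ 2 (fun M : Matrix (Fin n) (Fin n) ℝ => Real.log M.det) P :=
    (Real.contDiffAt_log.mpr hP.ne_zero).comp P contDiff_det.contDiffAt
  have hfderiv : (fun X => fderiv ℝ (fun M : Matrix (Fin n) (Fin n) ℝ => Real.log M.det) X B)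
      =ᶠ[𝓝 P] fun X => (X⁻¹ * B).trace := by
    filter_upwards [continuous_id.matrix_det.continuousAt.eventually_ne hP.ne_zero]
      with X hX using fderiv_log_det_apply (isUnit_iff_ne_zero.mpr hX) B
  have hhessian := fderiv_trace_inv_mul_apply hP A B
  rw [← hfderiv.fderiv_eq] at hhessian
  rw [iteratedFDeriv_two_apply, cons_val_zero, cons_val_one, cons_val_fin_one,
    fderiv_fderiv_apply ((hsmooth.fderiv_right (m := 1) le_rfl).differentiableAt one_ne_zero)]
  exact hhessian
end
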